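/- Let A ≠ 0 on U and define φ₁ = −3·(B·P + A_{1.0})/(5·A) + (3/5)·Q and φ₂ = 3·B·(B·P + A_{1.0})/(5·A²) − 3·(B_{1.0} + A_{0.1} + 3·B·Q)/(5·A) + (6/5)·R (formulas (4.14)). Then the pseudoscalar field Ω = (5/3)·(∂φ₁/∂y − ∂φ₂/∂x) is given by the mirror-symmetric effective formula (4.21): Ω = 2·B·A_{1.0}·(B·P + A_{1.0})/A³ − (2·B_{1.0} + 3·B·Q)·A_{1.0}/A² + (A_{0.1} − 2·B_{1.0})·B·P/A² − (B·A_{2.0} + B²·P_{1.0})/A² + B_{2.0}/A + (3·B_{1.0}·Q + 3·B·Q_{1.0} − B_{0.1}·P − B·P_{0.1})/A + Q_{0.1} − 2·R_{1.0}. -/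

import Mathlib

noncomputable section

open Real

/-- Partial derivative in the first argument (`f_{1.0}`). -/
def pdx (f : ℝ → ℝ → ℝ) : ℝ → ℝ → ℝ := fun x y => deriv (fun t => f t y) x

/-- Partial derivative in the second argument (`f_{0.1}`). -/
def pdy (f : ℝ → ℝ → ℝ) : ℝ → ℝ → ℝ := fun x y => deriv (fun t => f x t) y

/-- Indexed partial derivative: `0 ↦ ∂/∂x`, `1 ↦ ∂/∂y`. -/
def pd (i : Fin 2) (f : ℝ → ℝ → ℝ) : ℝ → ℝ → ℝ := if i = 0 then pdx f else pdy f

/-- Smoothness of a two-variable real function on a set `U ⊆ ℝ²`. -/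
def Smooth2 (U : Set (ℝ × ℝ)) (f : ℝ → ℝ → ℝ) : Prop :=
  ContDiffOn ℝ (⊤ : ℕ∞) (Function.uncurry f) U

/-- The quantity `A` of formula (1.6). -/
def coefA (P Q R S : ℝ → ℝ → ℝ) : ℝ → ℝ → ℝ := fun x y =>
  pdy (pdy P) x y - 2 * pdx (pdy Q) x y + pdx (pdx R) x y
    + 2 * P x y * pdx S x y + S x y * pdx P x y
    - 3 * P x y * pdy R x y - 3 * R x y * pdy P x y
    - 3 * Q x y * pdx R x y + 6 * Q x y * pdy Q x y

/-- The quantity `B` of formula (1.6). -/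
def coefB (P Q R S : ℝ → ℝ → ℝ) : ℝ → ℝ → ℝ := fun x y =>
  pdx (pdx S) x y - 2 * pdx (pdy R) x y + pdy (pdy Q) x y
    - 2 * S x y * pdy P x y - P x y * pdy S x y
    + 3 * S x y * pdx Q x y + 3 * Q x y * pdx S x y
    + 3 * R x y * pdy Q x y - 6 * R x y * pdx R x y

/-- `φ₁` given by formula (4.14). -/
def phiA1 (P Q R S : ℝ → ℝ → ℝ) : ℝ → ℝ → ℝ := fun x y =>
  -3 * (coefB P Q R S x y * P x y + pdx (coefA P Q R S) x y) / (5 * coefA P Q R S x y)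
    + (3/5) * Q x y

/-- `φ₂` given by formula (4.14). -/
def phiA2 (P Q R S : ℝ → ℝ → ℝ) : ℝ → ℝ → ℝ := fun x y =>
  3 * coefB P Q R S x y * (coefB P Q R S x y * P x y + pdx (coefA P Q R S) x y)
      / (5 * (coefA P Q R S x y)^2)
    - 3 * (pdx (coefB P Q R S) x y + pdy (coefA P Q R S) x y
        + 3 * coefB P Q R S x y * Q x y) / (5 * coefA P Q R S x y)
    + (6/5) * R x y


/-! Everything is a direct computation with the quotient rule. On the open set `U`, partial
derivatives of smooth functions are smooth, so `A` and `B` are smooth; the only analytic input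
is Schwarz's theorem: `∂φ₁/∂y` contains `∂_y∂_x A` and `∂φ₂/∂x` contains `∂_x∂_y A`, and these
cancel. After clearing the powers of `A` the remaining identity is polynomial. -/

open Function

section PartialDerivatives

variable {U : Set (ℝ × ℝ)} {f : ℝ → ℝ → ℝ} {x y : ℝ}

theorem Smooth2.differentiableAt (hf : Smooth2 U f) (hU : IsOpen U) (h : (x, y) ∈ U) :
    DifferentiableAt ℝ (uncurry f) (x, y) :=
  (hf.contDiffAt (hU.mem_nhds h)).differentiableAt (by simp)

theorem Smooth2.hasDerivAt_fderiv_apply_left (hf : Smooth2 U f) (hU : IsOpen U)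
    (h : (x, y) ∈ U) :
    HasDerivAt (fun t => f t y) (fderiv ℝ (uncurry f) (x, y) (1, 0)) x :=
  (hf.differentiableAt hU h).hasFDerivAt.comp_hasDerivAt (f := fun t => (t, y)) x
    ((hasDerivAt_id x).prodMk (hasDerivAt_const x y))

theorem Smooth2.hasDerivAt_fderiv_apply_right (hf : Smooth2 U f) (hU : IsOpen U)
    (h : (x, y) ∈ U) :
    HasDerivAt (fun t => f x t) (fderiv ℝ (uncurry f) (x, y) (0, 1)) y :=
  (hf.differentiableAt hU h).hasFDerivAt.comp_hasDerivAt (f := fun t => (x, t)) y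
    ((hasDerivAt_const y x).prodMk (hasDerivAt_id y))

theorem Smooth2.pdx_eq_fderiv (hf : Smooth2 U f) (hU : IsOpen U) (h : (x, y) ∈ U) :
    pdx f x y = fderiv ℝ (uncurry f) (x, y) (1, 0) :=
  (hf.hasDerivAt_fderiv_apply_left hU h).deriv

theorem Smooth2.pdy_eq_fderiv (hf : Smooth2 U f) (hU : IsOpen U) (h : (x, y) ∈ U) :
    pdy f x y = fderiv ℝ (uncurry f) (x, y) (0, 1) :=
  (hf.hasDerivAt_fderiv_apply_right hU h).deriv

theorem Smooth2.hasDerivAt_pdx (hf : Smooth2 U f) (hU : IsOpen U) (h : (x, y) ∈ U) :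
    HasDerivAt (fun t => f t y) (pdx f x y) x :=
  hf.pdx_eq_fderiv hU h ▸ hf.hasDerivAt_fderiv_apply_left hU h

theorem Smooth2.hasDerivAt_pdy (hf : Smooth2 U f) (hU : IsOpen U) (h : (x, y) ∈ U) :
    HasDerivAt (fun t => f x t) (pdy f x y) y :=
  hf.pdy_eq_fderiv hU h ▸ hf.hasDerivAt_fderiv_apply_right hU h

theorem Smooth2.eqOn_uncurry_pdx (hf : Smooth2 U f) (hU : IsOpen U) :
    Set.EqOn (uncurry (pdx f)) (fun p => fderiv ℝ (uncurry f) p (1, 0)) U :=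
  fun _ hp => hf.pdx_eq_fderiv hU hp

theorem Smooth2.eqOn_uncurry_pdy (hf : Smooth2 U f) (hU : IsOpen U) :
    Set.EqOn (uncurry (pdy f)) (fun p => fderiv ℝ (uncurry f) p (0, 1)) U :=
  fun _ hp => hf.pdy_eq_fderiv hU hp

theorem Smooth2.contDiffOn_fderiv_apply (hf : Smooth2 U f) (hU : IsOpen U) (v : ℝ × ℝ) :
    ContDiffOn ℝ (⊤ : ℕ∞) (fun p => fderiv ℝ (uncurry f) p v) U :=
  (hf.fderiv_of_isOpen hU (by exact_mod_cast le_top)).clm_apply contDiffOn_const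

theorem smooth2_pdx (hf : Smooth2 U f) (hU : IsOpen U) : Smooth2 U (pdx f) :=
  (hf.contDiffOn_fderiv_apply hU (1, 0)).congr (hf.eqOn_uncurry_pdx hU)

theorem smooth2_pdy (hf : Smooth2 U f) (hU : IsOpen U) : Smooth2 U (pdy f) :=
  (hf.contDiffOn_fderiv_apply hU (0, 1)).congr (hf.eqOn_uncurry_pdy hU)

theorem fderiv_fderiv_apply_eq {E F : Type*} [NormedAddCommGroup E] [NormedSpace ℝ E]
    [NormedAddCommGroup F] [NormedSpace ℝ F] {g : E → F} {p : E}
    (hg : DifferentiableAt ℝ (fderiv ℝ g) p) (v w : E) :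
    fderiv ℝ (fun q => fderiv ℝ g q v) p w = fderiv ℝ (fderiv ℝ g) p w v := by
  rw [fderiv_clm_apply hg (differentiableAt_const v)]
  simp

theorem Smooth2.pdx_pdy_comm (hf : Smooth2 U f) (hU : IsOpen U) (h : (x, y) ∈ U) :
    pdx (pdy f) x y = pdy (pdx f) x y := by
  have hf2 : ContDiffAt ℝ 2 (uncurry f) (x, y) :=
    (hf.contDiffAt (hU.mem_nhds h)).of_le (by decide)
  have hd : DifferentiableAt ℝ (fderiv ℝ (uncurry f)) (x, y) :=
    (hf2.fderiv_right (m := 1) le_rfl).differentiableAt (by simp)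
  rw [(smooth2_pdy hf hU).pdx_eq_fderiv hU h, (smooth2_pdx hf hU).pdy_eq_fderiv hU h,
    ((hf.eqOn_uncurry_pdy hU).eventuallyEq_of_mem (hU.mem_nhds h)).fderiv_eq,
    ((hf.eqOn_uncurry_pdx hU).eventuallyEq_of_mem (hU.mem_nhds h)).fderiv_eq,
    fderiv_fderiv_apply_eq hd, fderiv_fderiv_apply_eq hd,
    (hf2.isSymmSndFDerivAt (by simp)).eq]

end PartialDerivatives

section Coefficients

variable {U : Set (ℝ × ℝ)} {P Q R S : ℝ → ℝ → ℝ} {x y : ℝ}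

theorem smooth2_coefA (hU : IsOpen U) (hP : Smooth2 U P) (hQ : Smooth2 U Q)
    (hR : Smooth2 U R) (hS : Smooth2 U S) : Smooth2 U (coefA P Q R S) := by
  have := smooth2_pdy (smooth2_pdy hP hU) hU
  have := smooth2_pdx (smooth2_pdy hQ hU) hU
  have := smooth2_pdx (smooth2_pdx hR hU) hU
  have := smooth2_pdx hP hU; have := smooth2_pdy hP hU; have := smooth2_pdy hQ hU
  have := smooth2_pdx hR hU; have := smooth2_pdy hR hU; have := smooth2_pdx hS hU
  unfold Smooth2 uncurry at *
  unfold coefA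
  fun_prop

theorem smooth2_coefB (hU : IsOpen U) (hP : Smooth2 U P) (hQ : Smooth2 U Q)
    (hR : Smooth2 U R) (hS : Smooth2 U S) : Smooth2 U (coefB P Q R S) := by
  have := smooth2_pdx (smooth2_pdx hS hU) hU
  have := smooth2_pdx (smooth2_pdy hR hU) hU
  have := smooth2_pdy (smooth2_pdy hQ hU) hU
  have := smooth2_pdy hP hU; have := smooth2_pdx hQ hU; have := smooth2_pdy hQ hU
  have := smooth2_pdx hR hU; have := smooth2_pdx hS hU; have := smooth2_pdy hS hU
  unfold Smooth2 uncurry at *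
  unfold coefB
  fun_prop

local notation "𝒜" => coefA P Q R S
local notation "ℬ" => coefB P Q R S

theorem pdy_phiA1 (hU : IsOpen U) (hP : Smooth2 U P) (hQ : Smooth2 U Q)
    (hR : Smooth2 U R) (hS : Smooth2 U S) (hxy : (x, y) ∈ U) (hA : 𝒜 x y ≠ 0) :
    pdy (phiA1 P Q R S) x y =
      -3/5 * ((pdy ℬ x y * P x y + ℬ x y * pdy P x y + pdy (pdx 𝒜) x y) / 𝒜 x y
        - (ℬ x y * P x y + pdx 𝒜 x y) * pdy 𝒜 x y / 𝒜 x y ^ 2)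
      + 3/5 * pdy Q x y := by
  have hA' := smooth2_coefA hU hP hQ hR hS
  have hB' := smooth2_coefB hU hP hQ hR hS
  have h := (((((hB'.hasDerivAt_pdy hU hxy).mul (hP.hasDerivAt_pdy hU hxy)).add
      ((smooth2_pdx hA' hU).hasDerivAt_pdy hU hxy)).const_mul (-3)).div
      ((hA'.hasDerivAt_pdy hU hxy).const_mul 5) (mul_ne_zero (by norm_num) hA)).add
    ((hQ.hasDerivAt_pdy hU hxy).const_mul (3/5))
  refine h.deriv.trans ?_
  simp only [Pi.mul_apply, Pi.add_apply]
  field_simp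
  ring

theorem pdx_phiA2 (hU : IsOpen U) (hP : Smooth2 U P) (hQ : Smooth2 U Q)
    (hR : Smooth2 U R) (hS : Smooth2 U S) (hxy : (x, y) ∈ U) (hA : 𝒜 x y ≠ 0) :
    pdx (phiA2 P Q R S) x y =
      3/5 * ((pdx ℬ x y * (ℬ x y * P x y + pdx 𝒜 x y)
          + ℬ x y * (pdx ℬ x y * P x y + ℬ x y * pdx P x y + pdx (pdx 𝒜) x y)) / 𝒜 x y ^ 2
        - 2 * ℬ x y * (ℬ x y * P x y + pdx 𝒜 x y) * pdx 𝒜 x y / 𝒜 x y ^ 3)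
      - 3/5 * ((pdx (pdx ℬ) x y + pdx (pdy 𝒜) x y + 3 * (pdx ℬ x y * Q x y + ℬ x y * pdx Q x y))
          / 𝒜 x y
        - (pdx ℬ x y + pdy 𝒜 x y + 3 * ℬ x y * Q x y) * pdx 𝒜 x y / 𝒜 x y ^ 2)
      + 6/5 * pdx R x y := by
  have hA' := smooth2_coefA hU hP hQ hR hS
  have hB' := smooth2_coefB hU hP hQ hR hS
  have hBx := hB'.hasDerivAt_pdx hU hxy
  have hAx := hA'.hasDerivAt_pdx hU hxy
  have hBxx := (smooth2_pdx hB' hU).hasDerivAt_pdx hU hxy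
  have hAxx := (smooth2_pdx hA' hU).hasDerivAt_pdx hU hxy
  have hAyx := (smooth2_pdy hA' hU).hasDerivAt_pdx hU hxy
  have h := ((((hBx.const_mul 3).mul ((hBx.mul (hP.hasDerivAt_pdx hU hxy)).add hAxx)).div
      ((hAx.pow 2).const_mul 5) (mul_ne_zero (by norm_num) (pow_ne_zero 2 hA))).sub
    ((((hBxx.add hAyx).add ((hBx.const_mul 3).mul (hQ.hasDerivAt_pdx hU hxy))).const_mul 3).div
      (hAx.const_mul 5) (mul_ne_zero (by norm_num) hA))).add
    ((hR.hasDerivAt_pdx hU hxy).const_mul (6/5))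
  refine h.deriv.trans ?_
  simp only [Pi.mul_apply, Pi.add_apply, Pi.pow_apply]
  field_simp
  ring

end Coefficients

theorem Omega_effective_formula_A_ne_zero_general
    (U : Set (ℝ × ℝ)) (hU : IsOpen U)
    (P Q R S : ℝ → ℝ → ℝ)
    (hP : Smooth2 U P) (hQ : Smooth2 U Q) (hR : Smooth2 U R) (hS : Smooth2 U S)
    (hA : ∀ x y : ℝ, (x, y) ∈ U → coefA P Q R S x y ≠ 0) :
    ∀ x y : ℝ, (x, y) ∈ U →
      (5/3) * (pdy (phiA1 P Q R S) x y - pdx (phiA2 P Q R S) x y) =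
        2 * coefB P Q R S x y * pdx (coefA P Q R S) x y *
            (coefB P Q R S x y * P x y + pdx (coefA P Q R S) x y)
            / (coefA P Q R S x y)^3
        - (2 * pdx (coefB P Q R S) x y + 3 * coefB P Q R S x y * Q x y) *
            pdx (coefA P Q R S) x y / (coefA P Q R S x y)^2
        + (pdy (coefA P Q R S) x y - 2 * pdx (coefB P Q R S) x y) *
            coefB P Q R S x y * P x y / (coefA P Q R S x y)^2
        - (coefB P Q R S x y * pdx (pdx (coefA P Q R S)) x y
            + (coefB P Q R S x y)^2 * pdx P x y) / (coefA P Q R S x y)^2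
        + pdx (pdx (coefB P Q R S)) x y / coefA P Q R S x y
        + (3 * pdx (coefB P Q R S) x y * Q x y
            + 3 * coefB P Q R S x y * pdx Q x y
            - pdy (coefB P Q R S) x y * P x y
            - coefB P Q R S x y * pdy P x y) / coefA P Q R S x y
        + pdy Q x y - 2 * pdx R x y := by
  intro x y hxy
  have hAxy := hA x y hxy
  rw [pdy_phiA1 hU hP hQ hR hS hxy hAxy, pdx_phiA2 hU hP hQ hR hS hxy hAxy,
    (smooth2_coefA hU hP hQ hR hS).pdx_pdy_comm hU hxy]
  field_simp
  ring

/-- Effective formula (4.21) for `Ω = (5/3)·(∂φ₁/∂y − ∂φ₂/∂x)` when `A ≠ 0`. -/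
theorem Omega_effective_formula_A_ne_zero
    (U : Set (ℝ × ℝ)) (hU : IsOpen U) (hUconn : IsConnected U)
    (P Q R S : ℝ → ℝ → ℝ)
    (hP : Smooth2 U P) (hQ : Smooth2 U Q) (hR : Smooth2 U R) (hS : Smooth2 U S)
    (hA : ∀ x y : ℝ, (x, y) ∈ U → coefA P Q R S x y ≠ 0) :
    ∀ x y : ℝ, (x, y) ∈ U →
      (5/3) * (pdy (phiA1 P Q R S) x y - pdx (phiA2 P Q R S) x y) =
        2 * coefB P Q R S x y * pdx (coefA P Q R S) x y *
            (coefB P Q R S x y * P x y + pdx (coefA P Q R S) x y)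
            / (coefA P Q R S x y)^3
        - (2 * pdx (coefB P Q R S) x y + 3 * coefB P Q R S x y * Q x y) *
            pdx (coefA P Q R S) x y / (coefA P Q R S x y)^2
        + (pdy (coefA P Q R S) x y - 2 * pdx (coefB P Q R S) x y) *
            coefB P Q R S x y * P x y / (coefA P Q R S x y)^2
        - (coefB P Q R S x y * pdx (pdx (coefA P Q R S)) x y
            + (coefB P Q R S x y)^2 * pdx P x y) / (coefA P Q R S x y)^2
        + pdx (pdx (coefB P Q R S)) x y / coefA P Q R S x y
        + (3 * pdx (coefB P Q R S) x y * Q x y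
            + 3 * coefB P Q R S x y * pdx Q x y
            - pdy (coefB P Q R S) x y * P x y
            - coefB P Q R S x y * pdy P x y) / coefA P Q R S x y
        + pdy Q x y - 2 * pdx R x y :=
  Omega_effective_formula_A_ne_zero_general U hU P Q R S hP hQ hR hS hA
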